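/- arXiv:2507.18380 — 3 statements merged into one kernel-verified Lean document; each statement's English description precedes it below -/
import Mathlib

section
/- Let A be the adjacency matrix of a finite tree with maximum degree at most 3 (with at least one vertex). Then the matrix I - A/3 is invertible. -/
open Finset

/-- Let `A` be the adjacency matrix of a finite tree with maximum degree
at most 3 (with at least one vertex). Then the matrix `I - A/3` is invertible. -/
theorem stmt_6 {V : Type*} [Fintype V] [DecidableEq V] [Nonempty V]
    (G : SimpleGraph V) [DecidableRel G.Adj] (hT : G.IsTree)
    (hdeg : ∀ v, G.degree v ≤ 3) :
    IsUnit ((1 : Matrix V V ℝ) - (3 : ℝ)⁻¹ • G.adjMatrix ℝ) := by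
  by_contra hU
  rw [Matrix.isUnit_iff_isUnit_det, isUnit_iff_ne_zero, not_ne_iff] at hU
  obtain ⟨x, hx0, hx⟩ := (Matrix.exists_mulVec_eq_zero_iff).2 hU
  -- turn hx into: ∀ v, ∑ u in N(v), x u = 3 * x v
  have heq : ∀ v, ∑ u ∈ G.neighborFinset v, x u = 3 * x v := by
    intro v
    have := congrFun hx v
    simp [Matrix.sub_mulVec, Matrix.smul_mulVec, Pi.sub_apply, sub_eq_zero] at this
    -- this : x v = 3⁻¹ * ∑ ...
    field_simp at this
    linarith [this]
  set y : V → ℝ := fun v => |x v| with hy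
  obtain ⟨v0, -, hmax⟩ := Finset.exists_max_image (univ : Finset V) y ⟨Classical.arbitrary V, mem_univ _⟩
  set M := y v0 with hM
  have hMnn : 0 ≤ M := abs_nonneg _
  have hMpos : 0 < M := by
    rcases lt_or_eq_of_le hMnn with h | h
    · exact h
    · exfalso; apply hx0; funext v
      have h2 : y v ≤ 0 := h ▸ hmax v (mem_univ v)
      have h3 : x v = 0 := abs_nonpos_iff.mp h2
      simpa using h3
  -- key step
  have step : ∀ v, y v = M → (G.degree v = 3 ∧ ∀ u, G.Adj v u → y u = M) := by
    intro v hv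
    have h1 : 3 * M = |∑ u ∈ G.neighborFinset v, x u| := by
      rw [heq v, abs_mul, ← hv]; simp [abs_of_nonneg, hy]
    have h2 : |∑ u ∈ G.neighborFinset v, x u| ≤ ∑ u ∈ G.neighborFinset v, y u :=
      Finset.abs_sum_le_sum_abs _ _
    have h3 : ∑ u ∈ G.neighborFinset v, y u ≤ ∑ u ∈ G.neighborFinset v, M :=
      Finset.sum_le_sum fun u _ => hmax u (mem_univ u)
    have h4 : ∑ u ∈ G.neighborFinset v, (M : ℝ) = (G.degree v : ℝ) * M := by
      rw [Finset.sum_const, SimpleGraph.card_neighborFinset_eq_degree]; ring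
    have h5 : (G.degree v : ℝ) * M ≤ 3 * M := by
      have : (G.degree v : ℝ) ≤ 3 := by exact_mod_cast hdeg v
      nlinarith
    have hdeq : (G.degree v : ℝ) * M = 3 * M := by linarith
    have hdeg3 : G.degree v = 3 := by
      have : (G.degree v : ℝ) = 3 := mul_right_cancel₀ (ne_of_gt hMpos) hdeq
      exact_mod_cast this
    have hsum : ∑ u ∈ G.neighborFinset v, y u = ∑ u ∈ G.neighborFinset v, M := by
      rw [h4, hdeq]; linarith
    have := (Finset.sum_eq_sum_iff_of_le (fun u _ => hmax u (mem_univ u))).1 hsum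
    exact ⟨hdeg3, fun u hu => this u (G.mem_neighborFinset v u |>.2 hu)⟩
  -- propagate along walks
  have prop : ∀ (a b : V) (w : G.Walk a b), y a = M → y b = M := by
    intro a b w
    induction w with
    | nil => exact id
    | cons h p ih => exact fun ha => ih ((step _ ha).2 _ h)
  have hdegall : ∀ v, G.degree v = 3 := by
    intro v
    obtain ⟨w⟩ := hT.isConnected v0 v
    exact (step v (prop _ _ w rfl)).1
  have h1 : ∑ v, G.degree v = 3 * Fintype.card V := by
    rw [Finset.sum_congr rfl fun v _ => hdegall v, Finset.sum_const, Fintype.card,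
      smul_eq_mul, mul_comm]
  have h2 := G.sum_degrees_eq_twice_card_edges
  have h3 := hT.card_edgeFinset
  have h4 : 0 < Fintype.card V := Fintype.card_pos
  omega
end

section
/- Let τ_n be an unrooted bifurcating tree topology with n ≥ 4 leaves, A_n its interior adjacency matrix and C_n its leaf-interior cross adjacency matrix. Then the fixed-point iteration F^{(m+1)} = (A_n/3)F^{(m)} + C_n/3 converges linearly to the unique solution of F = (A_n/3)F + C_n/3 with contraction rate at most 2√2/3, uniformly over all tree topologies, all n, and all initial conditions. -/
open Matrix
open scoped Matrix.Norms.L2Operator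

lemma aux_opNorm_le_of_01 {m n : Type*} [Fintype m] [Fintype n] [DecidableEq n]
    (M : Matrix m n ℝ) (r c : ℝ) (hr : 0 ≤ r) (hc : 0 ≤ c)
    (h01 : ∀ i j, M i j = 0 ∨ M i j = 1)
    (hrow : ∀ i, ∑ j, M i j ≤ r) (hcol : ∀ j, ∑ i, M i j ≤ c) :
    ‖M‖ ≤ Real.sqrt (r * c) := by
  rw [Matrix.l2_opNorm_def]
  apply ContinuousLinearMap.opNorm_le_bound _ (Real.sqrt_nonneg _)
  intro x
  have happ : (LinearEquiv.trans Matrix.toEuclideanLin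
      LinearMap.toContinuousLinearMap M) x
      = (WithLp.equiv 2 (m → ℝ)).symm (M *ᵥ (WithLp.equiv 2 (n → ℝ)) x) := by
    simp [LinearEquiv.trans_apply, Matrix.toEuclideanLin_apply]
  rw [happ]
  have hx : ‖x‖ = Real.sqrt (∑ j, (x j) ^ 2) := by
    rw [EuclideanSpace.norm_eq]
    congr 1
    refine Finset.sum_congr rfl fun j _ => ?_
    rw [Real.norm_eq_abs, sq_abs]
  have hMx : ‖(WithLp.equiv 2 (m → ℝ)).symm (M *ᵥ (WithLp.equiv 2 (n → ℝ)) x)‖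
      = Real.sqrt (∑ i, (M *ᵥ (fun j => x j)) i ^ 2) := by
    rw [EuclideanSpace.norm_eq]
    congr 1
    refine Finset.sum_congr rfl fun i _ => ?_
    rw [Real.norm_eq_abs, sq_abs]
    rfl
  rw [hMx, hx, ← Real.sqrt_mul (mul_nonneg hr hc)]
  apply Real.sqrt_le_sqrt
  have hMsq : ∀ i j, M i j ^ 2 = M i j := by
    intro i j; rcases h01 i j with h | h <;> simp [h]
  have key : ∀ i, (M *ᵥ (fun j => x j)) i ^ 2 ≤ r * ∑ j, M i j * x j ^ 2 := by
    intro i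
    have cs := Finset.sum_mul_sq_le_sq_mul_sq Finset.univ (fun j => M i j)
      (fun j => M i j * x j)
    have h1 : ∀ j, M i j * (M i j * x j) = M i j * x j := by
      intro j; rcases h01 i j with h | h <;> simp [h]
    have h2 : ∀ j, (M i j * x j) ^ 2 = M i j * x j ^ 2 := by
      intro j; rcases h01 i j with h | h <;> simp [h, mul_pow]
    simp only [h1, h2, hMsq] at cs
    calc (M *ᵥ (fun j => x j)) i ^ 2 = (∑ j, M i j * x j) ^ 2 := rfl
      _ ≤ (∑ j, M i j) * ∑ j, M i j * x j ^ 2 := cs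
      _ ≤ r * ∑ j, M i j * x j ^ 2 := by
          apply mul_le_mul_of_nonneg_right (hrow i)
          apply Finset.sum_nonneg
          intro j _
          rcases h01 i j with h | h <;> simp [h] <;> positivity
  calc ∑ i, (M *ᵥ (fun j => x j)) i ^ 2 ≤ ∑ i, r * ∑ j, M i j * x j ^ 2 :=
        Finset.sum_le_sum fun i _ => key i
    _ = r * ∑ j, (∑ i, M i j) * x j ^ 2 := by
        rw [← Finset.mul_sum, Finset.sum_comm]
        congr 1
        refine Finset.sum_congr rfl fun j _ => ?_
        rw [Finset.sum_mul]
    _ ≤ r * ∑ j, c * x j ^ 2 := by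
        apply mul_le_mul_of_nonneg_left _ hr
        apply Finset.sum_le_sum
        intro j _
        apply mul_le_mul_of_nonneg_right (hcol j) (sq_nonneg _)
    _ = r * c * ∑ j, x j ^ 2 := by rw [← Finset.mul_sum, mul_assoc]

namespace StmtAux
open SimpleGraph

variable {V : Type*} [DecidableEq V] {G : SimpleGraph V}

lemma path_length_eq_dist (hT : G.IsTree) {u v : V} (p : G.Walk u v) (hp : p.IsPath) :
    p.length = G.dist u v := by
  obtain ⟨q, hq, hql⟩ := (hT.isConnected u v).exists_path_of_dist
  have := (hT.existsUnique_path u v).unique hp hq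
  rw [this, hql]

lemma adj_dist_cases (hT : G.IsTree) (ρ : V) {u v : V} (h : G.Adj u v) :
    G.dist ρ v = G.dist ρ u + 1 ∨ G.dist ρ u = G.dist ρ v + 1 := by
  obtain ⟨p, hp, hpl⟩ := (hT.isConnected ρ u).exists_path_of_dist
  by_cases hv : v ∈ p.support
  · right
    have h1 : (p.takeUntil v hv).length = G.dist ρ v :=
      path_length_eq_dist hT _ (hp.takeUntil hv)
    have h2 : (p.dropUntil v hv).length = G.dist v u :=
      path_length_eq_dist hT _ (hp.dropUntil hv)
    have h3 : G.dist v u = 1 := SimpleGraph.dist_eq_one_iff_adj.2 h.symm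
    have h4 := p.take_spec hv
    have h5 : p.length = (p.takeUntil v hv).length + (p.dropUntil v hv).length := by
      conv_lhs => rw [← h4]
      rw [SimpleGraph.Walk.length_append]
    omega
  · left
    have hq : (p.concat h).IsPath := by
      rw [SimpleGraph.Walk.isPath_def, SimpleGraph.Walk.support_concat,
        List.nodup_append]
      refine ⟨hp.support_nodup, List.nodup_singleton v, ?_⟩
      intro a ha b hb hab
      rw [List.mem_singleton] at hb
      rw [hab, hb] at ha
      exact hv ha
    have := path_length_eq_dist hT _ hq
    rw [SimpleGraph.Walk.length_concat] at this
    omega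

lemma parent_unique (hT : G.IsTree) (ρ : V) {v w₁ w₂ : V}
    (h1 : G.Adj w₁ v) (h2 : G.Adj w₂ v)
    (d1 : G.dist ρ v = G.dist ρ w₁ + 1) (d2 : G.dist ρ v = G.dist ρ w₂ + 1) :
    w₁ = w₂ := by
  have key : ∀ (w : V) (h : G.Adj w v), G.dist ρ v = G.dist ρ w + 1 →
      ∃ p : G.Walk ρ v, p.IsPath ∧ ∃ (q : G.Walk ρ w), q.IsPath ∧ p = q.concat h := by
    intro w h hd
    obtain ⟨q, hq, hql⟩ := (hT.isConnected ρ w).exists_path_of_dist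
    have hvq : v ∉ q.support := by
      intro hv
      have := path_length_eq_dist hT _ (hq.takeUntil hv)
      have hle := q.length_takeUntil_le hv
      omega
    have hqc : (q.concat h).IsPath := by
      rw [SimpleGraph.Walk.isPath_def, SimpleGraph.Walk.support_concat,
        List.nodup_append]
      refine ⟨hq.support_nodup, List.nodup_singleton v, ?_⟩
      intro a ha b hb hab
      rw [List.mem_singleton] at hb
      rw [hab, hb] at ha
      exact hvq ha
    exact ⟨q.concat h, hqc, q, hq, rfl⟩
  obtain ⟨p1, hp1, q1, hq1, rfl⟩ := key w₁ h1 d1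
  obtain ⟨p2, hp2, q2, hq2, hpq⟩ := key w₂ h2 d2
  have := (hT.existsUnique_path ρ v).unique hp1 hp2
  rw [hpq] at this
  obtain ⟨hv, -⟩ := SimpleGraph.Walk.concat_inj this
  exact hv

lemma parent_exists (hT : G.IsTree) (ρ : V) {v : V} (hv : v ≠ ρ) :
    ∃ w, G.Adj w v ∧ G.dist ρ v = G.dist ρ w + 1 := by
  obtain ⟨p, hp, hpl⟩ := (hT.isConnected v ρ).exists_path_of_dist
  obtain ⟨w, h, q, rfl⟩ := SimpleGraph.Walk.exists_eq_cons_of_ne hv p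
  refine ⟨w, h.symm, ?_⟩
  have hq : q.IsPath := hp.of_cons
  have h1 : q.length = G.dist w ρ := path_length_eq_dist hT _ hq
  have h2 : (SimpleGraph.Walk.cons h q).length = G.dist v ρ := hpl
  rw [SimpleGraph.Walk.length_cons] at h2
  have e1 : G.dist ρ v = G.dist v ρ := SimpleGraph.dist_comm
  have e2 : G.dist ρ w = G.dist w ρ := SimpleGraph.dist_comm
  omega

end StmtAux

open scoped Matrix.Norms.L2Operator in
/-- Let `τ_n` be an unrooted bifurcating tree topology with `n ≥ 4`
leaves (leaves `Sum.inl i` of degree 1, internal vertices `Sum.inr k` of degree 3),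
`A` its interior adjacency matrix and `C` its leaf-interior cross adjacency matrix.
Then the fixed-point iteration `F^{(m+1)} = (A/3)F^{(m)} + C/3` converges linearly to
the unique solution of `F = (A/3)F + C/3` with contraction rate at most `2√2/3`,
for every initial condition. -/
theorem stmt_8 (n : ℕ) (hn : 4 ≤ n) (G : SimpleGraph (Fin n ⊕ Fin (n - 2)))
    [DecidableRel G.Adj] (hT : G.IsTree)
    (hleaf : ∀ i, G.degree (Sum.inl i) = 1) (hint : ∀ k, G.degree (Sum.inr k) = 3)
    (A : Matrix (Fin (n - 2)) (Fin (n - 2)) ℝ)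
    (hA : A = Matrix.of fun i j => if G.Adj (Sum.inr i) (Sum.inr j) then 1 else 0)
    (C : Matrix (Fin (n - 2)) (Fin n) ℝ)
    (hC : C = Matrix.of fun i j => if G.Adj (Sum.inr i) (Sum.inl j) then 1 else 0) :
    (∃! F : Matrix (Fin (n - 2)) (Fin n) ℝ,
        F = (3 : ℝ)⁻¹ • (A * F) + (3 : ℝ)⁻¹ • C) ∧
    ∀ Fstar : Matrix (Fin (n - 2)) (Fin n) ℝ,
      Fstar = (3 : ℝ)⁻¹ • (A * Fstar) + (3 : ℝ)⁻¹ • C →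
      ∀ Fseq : ℕ → Matrix (Fin (n - 2)) (Fin n) ℝ,
        (∀ m, Fseq (m + 1) = (3 : ℝ)⁻¹ • (A * Fseq m) + (3 : ℝ)⁻¹ • C) →
        ∀ m, ‖Fseq m - Fstar‖ ≤ (2 * Real.sqrt 2 / 3) ^ m * ‖Fseq 0 - Fstar‖ := by
  classical
  have hn0 : 0 < n := by omega
  set ρ : Fin n ⊕ Fin (n - 2) := Sum.inl ⟨0, hn0⟩ with hρ
  set P : Fin (n - 2) → Fin (n - 2) → Prop := fun i j =>
    G.Adj (Sum.inr i) (Sum.inr j) ∧ G.dist ρ (Sum.inr j) = G.dist ρ (Sum.inr i) + 1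
    with hP
  set B : Matrix (Fin (n - 2)) (Fin (n - 2)) ℝ :=
    Matrix.of (fun i j => if P i j then 1 else 0) with hB
  -- A = B + Bᵀ
  have hAB : A = B + Bᵀ := by
    ext i j
    rw [hA]
    simp only [Matrix.add_apply, Matrix.transpose_apply, Matrix.of_apply, hB, hP]
    by_cases hadj : G.Adj (Sum.inr i) (Sum.inr j)
    · rcases StmtAux.adj_dist_cases hT ρ hadj with hd | hd
      · rw [if_pos hadj, if_pos ⟨hadj, hd⟩, if_neg (by rintro ⟨-, hd'⟩; omega)]
        norm_num
      · rw [if_pos hadj, if_neg (by rintro ⟨-, hd'⟩; omega),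
          if_pos ⟨hadj.symm, hd⟩]
        norm_num
    · rw [if_neg hadj, if_neg (by rintro ⟨h, -⟩; exact hadj h),
        if_neg (by rintro ⟨h, -⟩; exact hadj h.symm)]
      norm_num
  -- entries of B
  have hB01 : ∀ i j, B i j = 0 ∨ B i j = 1 := by
    intro i j
    simp only [hB, Matrix.of_apply]
    split <;> simp
  -- row sums of B
  have hBrow : ∀ i, ∑ j, B i j ≤ 2 := by
    intro i
    have hcard : (Finset.univ.filter fun j => P i j).card ≤ 2 := by
      obtain ⟨w, hw, hwd⟩ := StmtAux.parent_exists hT ρ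
        (v := Sum.inr i) (by simp [hρ])
      have hmem : w ∈ G.neighborFinset (Sum.inr i) := by
        rw [SimpleGraph.mem_neighborFinset]; exact hw.symm
      have hsub : ∀ j ∈ Finset.univ.filter fun j => P i j,
          Sum.inr j ∈ (G.neighborFinset (Sum.inr i)).erase w := by
        intro j hj
        rw [Finset.mem_filter] at hj
        obtain ⟨-, hadj, hd⟩ := hj
        rw [Finset.mem_erase, SimpleGraph.mem_neighborFinset]
        refine ⟨?_, hadj⟩
        intro hjw
        rw [← hjw] at hwd
        omega
      have hinj : Set.InjOn (fun j => (Sum.inr j : Fin n ⊕ Fin (n - 2)))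
          (Finset.univ.filter fun j => P i j) := by
        intro a _ b _ hab
        exact Sum.inr_injective hab
      have := Finset.card_le_card_of_injOn _ hsub hinj
      have hE : ((G.neighborFinset (Sum.inr i)).erase w).card = 2 := by
        rw [Finset.card_erase_of_mem hmem, SimpleGraph.card_neighborFinset_eq_degree,
          hint i]
      omega
    calc ∑ j, B i j = ((Finset.univ.filter fun j => P i j).card : ℝ) := by
          simp only [hB, Matrix.of_apply]
          rw [Finset.sum_boole]
      _ ≤ 2 := by exact_mod_cast hcard
  -- column sums of B
  have hBcol : ∀ j, ∑ i, B i j ≤ 1 := by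
    intro j
    have hcard : (Finset.univ.filter fun i => P i j).card ≤ 1 := by
      rw [Finset.card_le_one]
      intro a ha b hb
      rw [Finset.mem_filter] at ha hb
      obtain ⟨-, haadj, had⟩ := ha
      obtain ⟨-, hbadj, hbd⟩ := hb
      have := StmtAux.parent_unique hT ρ haadj hbadj had hbd
      exact Sum.inr_injective this
    calc ∑ i, B i j = ((Finset.univ.filter fun i => P i j).card : ℝ) := by
          simp only [hB, Matrix.of_apply]
          rw [Finset.sum_boole]
      _ ≤ 1 := by exact_mod_cast hcard
  -- norm bounds
  have hnB : ‖B‖ ≤ Real.sqrt 2 := by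
    have := aux_opNorm_le_of_01 B 2 1 (by norm_num) (by norm_num) hB01 hBrow hBcol
    rwa [mul_one] at this
  have hnBT : ‖Bᵀ‖ ≤ Real.sqrt 2 := by
    have := aux_opNorm_le_of_01 Bᵀ 1 2 (by norm_num) (by norm_num)
      (fun i j => hB01 j i) (fun i => hBcol i) (fun j => hBrow j)
    rwa [one_mul] at this
  have hnA : ‖A‖ ≤ 2 * Real.sqrt 2 := by
    rw [hAB]
    calc ‖B + Bᵀ‖ ≤ ‖B‖ + ‖Bᵀ‖ := norm_add_le _ _
      _ ≤ Real.sqrt 2 + Real.sqrt 2 := add_le_add hnB hnBT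
      _ = 2 * Real.sqrt 2 := by ring
  have hsqrt2 : Real.sqrt 2 ^ 2 = 2 := Real.sq_sqrt (by norm_num)
  have hsqrt2nn : 0 ≤ Real.sqrt 2 := Real.sqrt_nonneg 2
  have hrate : 2 * Real.sqrt 2 < 3 := by nlinarith
  -- the contraction matrix
  set tM : Matrix (Fin (n - 2)) (Fin (n - 2)) ℝ := (3 : ℝ)⁻¹ • A with htM
  have hntM : ‖tM‖ < 1 := by
    rw [htM, norm_smul, Real.norm_eq_abs]
    have : |(3 : ℝ)⁻¹| = 3⁻¹ := abs_of_pos (by norm_num)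
    rw [this]
    nlinarith [norm_nonneg A]
  have key : ∀ F : Matrix (Fin (n - 2)) (Fin n) ℝ,
      (F = (3 : ℝ)⁻¹ • (A * F) + (3 : ℝ)⁻¹ • C) ↔ ((1 - tM) * F = (3 : ℝ)⁻¹ • C) := by
    intro F
    rw [Matrix.sub_mul, Matrix.one_mul, htM, Matrix.smul_mul, sub_eq_iff_eq_add]
    constructor
    · intro h; exact h.trans (add_comm _ _)
    · intro h; exact h.trans (add_comm _ _)
  have hval : ((Units.oneSub tM hntM : Units _) : Matrix (Fin (n - 2)) (Fin (n - 2)) ℝ)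
      = 1 - tM := rfl
  constructor
  · have hfix : (1 - tM) * ((↑(Units.oneSub tM hntM)⁻¹ : Matrix (Fin (n - 2)) (Fin (n - 2)) ℝ)
        * ((3 : ℝ)⁻¹ • C)) = (3 : ℝ)⁻¹ • C := by
      rw [← hval, ← Matrix.mul_assoc, Units.mul_inv, Matrix.one_mul]
    refine ⟨_, (key _).mpr hfix, fun F hF => ?_⟩
    have h2 := (key F).mp hF
    rw [← hval] at h2
    calc F = (↑(Units.oneSub tM hntM)⁻¹ : Matrix (Fin (n - 2)) (Fin (n - 2)) ℝ)
          * ((↑(Units.oneSub tM hntM) : Matrix (Fin (n - 2)) (Fin (n - 2)) ℝ) * F) := by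
          rw [← Matrix.mul_assoc, Units.inv_mul, Matrix.one_mul]
      _ = _ := by rw [h2]
  · intro Fstar hFs Fseq hFrec m
    induction m with
    | zero => simp
    | succ m ih =>
      have hd : Fseq (m + 1) - Fstar = (3 : ℝ)⁻¹ • (A * (Fseq m - Fstar)) := by
        rw [hFrec m]
        nth_rewrite 1 [hFs]
        rw [Matrix.mul_sub]
        module
      have hnonneg : (0:ℝ) ≤ ‖Fseq m - Fstar‖ := norm_nonneg _
      calc ‖Fseq (m + 1) - Fstar‖ = ‖(3 : ℝ)⁻¹‖ * ‖A * (Fseq m - Fstar)‖ := by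
            rw [hd, norm_smul]
        _ = 3⁻¹ * ‖A * (Fseq m - Fstar)‖ := by
            rw [Real.norm_eq_abs, abs_of_pos]; norm_num
        _ ≤ 3⁻¹ * (‖A‖ * ‖Fseq m - Fstar‖) := by
            have := Matrix.l2_opNorm_mul A (Fseq m - Fstar)
            have h3 : (0:ℝ) ≤ 3⁻¹ := by norm_num
            exact mul_le_mul_of_nonneg_left this h3
        _ ≤ 3⁻¹ * ((2 * Real.sqrt 2) * ((2 * Real.sqrt 2 / 3) ^ m * ‖Fseq 0 - Fstar‖)) := by
            have h1 : ‖A‖ * ‖Fseq m - Fstar‖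
                ≤ (2 * Real.sqrt 2) * ((2 * Real.sqrt 2 / 3) ^ m * ‖Fseq 0 - Fstar‖) := by
              apply mul_le_mul hnA ih hnonneg (by positivity)
            have h3 : (0:ℝ) ≤ 3⁻¹ := by norm_num
            exact mul_le_mul_of_nonneg_left h1 h3
        _ = (2 * Real.sqrt 2 / 3) ^ (m + 1) * ‖Fseq 0 - Fstar‖ := by ring
end

section
/- Subdividing an edge (u,v) of an unrooted bifurcating tree with n ≥ 3 leaves by a new degree-3 vertex w and attaching a new leaf to w yields an unrooted bifurcating tree with n+1 leaves; moreover the two resulting trees obtained from distinct edges e ≠ e' of the same tree are non-isomorphic as leaf-labeled trees. -/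
/-- Vertex type for the autoregressive tree-building process: `Sum.inl i` is the
leaf `x_{i+1}` and `Sum.inr k` is the `(k+1)`-st internal vertex. -/
abbrev PV : Type := ℕ ⊕ ℕ

/-- The vertices actually used by an ordinal tree topology of rank `n`:
leaves `x_1, …, x_n` and `n - 2` internal vertices. -/
def activeVerts (n : ℕ) : Set PV :=
  {v | match v with | Sum.inl i => i < n | Sum.inr k => k + 2 < n}

open SimpleGraph

lemma mem_active_inl {m i : ℕ} : (Sum.inl i : PV) ∈ activeVerts m ↔ i < m := Iff.rfl
lemma mem_active_inr {m k : ℕ} : (Sum.inr k : PV) ∈ activeVerts m ↔ k + 2 < m := Iff.rfl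

lemma activeVerts_mono {m : ℕ} : activeVerts m ⊆ activeVerts (m+1) := by
  intro v hv
  rcases v with i | k
  · exact Nat.lt_succ_of_lt hv
  · exact Nat.lt_succ_of_lt hv

lemma activeVerts_finite (m : ℕ) : (activeVerts m).Finite := by
  have hsub : activeVerts m ⊆ (Sum.inl '' Set.Iio m) ∪ (Sum.inr '' Set.Iio m) := by
    intro v hv
    rcases v with i | k
    · exact Or.inl ⟨i, hv, rfl⟩
    · refine Or.inr ⟨k, Set.mem_Iio.mpr ?_, rfl⟩
      have h2 : k + 2 < m := hv
      omega
  exact (((Set.finite_Iio m).image _).union ((Set.finite_Iio m).image _)).subset hsub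

lemma walk_lift {G : SimpleGraph PV} {s : Set PV}
    (hs : ∀ a b, G.Adj a b → a ∈ s ∧ b ∈ s) :
    ∀ {a b : PV} (p : G.Walk a b) (ha : a ∈ s) (hb : b ∈ s),
      ∃ q : (G.induce s).Walk ⟨a, ha⟩ ⟨b, hb⟩,
        q.map (SimpleGraph.Embedding.induce s).toHom = p := by
  intro a b p
  induction p with
  | nil => intro ha hb; exact ⟨SimpleGraph.Walk.nil, rfl⟩
  | @cons a c b h p ih =>
    intro ha hb
    obtain ⟨-, hc⟩ := hs _ _ h
    obtain ⟨q, hq⟩ := ih hc hb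
    refine ⟨SimpleGraph.Walk.cons (by exact h : (G.induce s).Adj ⟨a, ha⟩ ⟨c, hc⟩) q, ?_⟩
    rw [← hq]; rfl

lemma induce_connected_of_reachable {G : SimpleGraph PV} {s : Set PV}
    (hs : ∀ a b, G.Adj a b → a ∈ s ∧ b ∈ s) (hne : s.Nonempty)
    (hr : ∀ a ∈ s, ∀ b ∈ s, G.Reachable a b) : (G.induce s).Connected := by
  rw [SimpleGraph.connected_iff]
  constructor
  · rintro ⟨a, ha⟩ ⟨b, hb⟩
    obtain ⟨p⟩ := hr a ha b hb
    obtain ⟨q, -⟩ := walk_lift hs p ha hb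
    exact ⟨q⟩
  · obtain ⟨a, ha⟩ := hne
    exact ⟨⟨a, ha⟩⟩

lemma acyclic_of_induce {G : SimpleGraph PV} {s : Set PV}
    (hs : ∀ a b, G.Adj a b → a ∈ s ∧ b ∈ s)
    (h : (G.induce s).IsAcyclic) : G.IsAcyclic := by
  intro v c hc
  have hv : v ∈ s := by
    cases c with
    | nil => exact absurd rfl hc.ne_nil
    | cons h' p => exact (hs _ _ h').1
  obtain ⟨q, hq⟩ := walk_lift hs c hv hv
  refine h q ?_
  rw [← SimpleGraph.Walk.map_isCycle_iff_of_injective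
      (f := (SimpleGraph.Embedding.induce s).toHom) Subtype.val_injective, hq]
  exact hc

lemma induce_acyclic_of_acyclic {G : SimpleGraph PV} {s : Set PV}
    (h : G.IsAcyclic) : (G.induce s).IsAcyclic := by
  intro v c hc
  exact h (c.map (SimpleGraph.Embedding.induce s).toHom)
    ((SimpleGraph.Walk.map_isCycle_iff_of_injective
      (f := (SimpleGraph.Embedding.induce s).toHom) Subtype.val_injective).mpr hc)

lemma concat_isPath {V : Type*} {G : SimpleGraph V} {a b c : V} {p : G.Walk a b}
    (hp : p.IsPath) (h : G.Adj b c) (hc : c ∉ p.support) : (p.concat h).IsPath := by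
  rw [← SimpleGraph.Walk.isPath_reverse_iff, SimpleGraph.Walk.reverse_concat,
    SimpleGraph.Walk.cons_isPath_iff]
  refine ⟨by simpa using hp, ?_⟩
  simpa [SimpleGraph.Walk.support_reverse] using hc

/-- `G` is (a representative of) an ordinal tree topology of rank `n`: all its edges
are between active vertices, the induced graph on the active vertices is a tree,
every leaf has degree 1, and every internal vertex has degree 3. -/
def IsOrdinalTree (n : ℕ) (G : SimpleGraph PV) : Prop :=
  (∀ a b, G.Adj a b → a ∈ activeVerts n ∧ b ∈ activeVerts n) ∧
  (G.induce (activeVerts n)).IsTree ∧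
  (∀ i, i < n → (G.neighborSet (Sum.inl i)).ncard = 1) ∧
  (∀ k, k + 2 < n → (G.neighborSet (Sum.inr k)).ncard = 3)

/-- The unique ordinal tree topology of rank 3: the three leaves joined to one
internal vertex. -/
def tau3 : SimpleGraph PV :=
  SimpleGraph.fromEdgeSet
    {s(Sum.inl 0, Sum.inr 0), s(Sum.inl 1, Sum.inr 0), s(Sum.inl 2, Sum.inr 0)}

/-- One step of the process at stage `n`: the chosen edge `e` of `τ_n` is removed,
its two endpoints are joined to the new internal vertex `w = Sum.inr (n - 2)`, and
the new leaf `x_{n+1} = Sum.inl n` is attached to `w`. -/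
def addLeaf (G : SimpleGraph PV) (n : ℕ) (e : Sym2 PV) : SimpleGraph PV :=
  SimpleGraph.fromEdgeSet
    ((G.edgeSet \ {e}) ∪ {p | ∃ x ∈ e, p = s(x, (Sum.inr (n - 2) : PV))} ∪
      {s((Sum.inr (n - 2) : PV), Sum.inl n)})

lemma addLeaf_adj_iff {G : SimpleGraph PV} {n : ℕ} {u v a b : PV} :
    (addLeaf G n s(u,v)).Adj a b ↔ a ≠ b ∧
      ((G.Adj a b ∧ s(a,b) ≠ s(u,v)) ∨ s(a,b) = s(u, Sum.inr (n-2)) ∨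
        s(a,b) = s(v, Sum.inr (n-2)) ∨ s(a,b) = s(Sum.inr (n-2), Sum.inl n)) := by
  rw [addLeaf, SimpleGraph.fromEdgeSet_adj]
  simp only [Set.mem_union, Set.mem_diff, Set.mem_setOf_eq, Set.mem_singleton_iff,
    Sym2.mem_iff, SimpleGraph.mem_edgeSet]
  constructor
  · rintro ⟨(⟨⟨h1, h2⟩ | ⟨x, (rfl | rfl), hx⟩⟩ | h), hne⟩ <;> tauto
  · rintro ⟨hne, (⟨h1, h2⟩ | h | h | h)⟩
    · exact ⟨Or.inl (Or.inl ⟨h1, h2⟩), hne⟩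
    · exact ⟨Or.inl (Or.inr ⟨u, Or.inl rfl, h⟩), hne⟩
    · exact ⟨Or.inl (Or.inr ⟨v, Or.inr rfl, h⟩), hne⟩
    · exact ⟨Or.inr h, hne⟩

section NB
variable {n : ℕ} {G : SimpleGraph PV} {u v : PV}

lemma w_not_active (hn : 3 ≤ n) : (Sum.inr (n-2) : PV) ∉ activeVerts n := by
  intro h; have : (n-2) + 2 < n := h; omega

lemma xl_not_active : (Sum.inl n : PV) ∉ activeVerts n := by
  intro h; exact lt_irrefl n h

lemma nbhd_w (hn : 3 ≤ n) (hG : IsOrdinalTree n G) (huv : G.Adj u v) :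
    (addLeaf G n s(u,v)).neighborSet (Sum.inr (n-2)) = {u, v, Sum.inl n} := by
  obtain ⟨hu, hv⟩ := hG.1 u v huv
  have hw := w_not_active hn
  have hwu : (Sum.inr (n-2) : PV) ≠ u := fun h => hw (h ▸ hu)
  have hwv : (Sum.inr (n-2) : PV) ≠ v := fun h => hw (h ▸ hv)
  have hwx : (Sum.inr (n-2) : PV) ≠ Sum.inl n := by simp
  have hGw : ∀ b, ¬ G.Adj (Sum.inr (n-2)) b := fun b h => hw (hG.1 _ _ h).1
  ext b
  simp only [SimpleGraph.mem_neighborSet, addLeaf_adj_iff, Sym2.eq_iff,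
    Set.mem_insert_iff, Set.mem_singleton_iff, ne_eq]
  aesop

lemma nbhd_xl (hn : 3 ≤ n) (hG : IsOrdinalTree n G) (huv : G.Adj u v) :
    (addLeaf G n s(u,v)).neighborSet (Sum.inl n) = {Sum.inr (n-2)} := by
  obtain ⟨hu, hv⟩ := hG.1 u v huv
  have hxu : (Sum.inl n : PV) ≠ u := fun h => xl_not_active (h ▸ hu)
  have hxv : (Sum.inl n : PV) ≠ v := fun h => xl_not_active (h ▸ hv)
  have hxw : (Sum.inl n : PV) ≠ Sum.inr (n-2) := by simp
  have hGx : ∀ b, ¬ G.Adj (Sum.inl n) b := fun b h => xl_not_active (hG.1 _ _ h).1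
  ext b
  simp only [SimpleGraph.mem_neighborSet, addLeaf_adj_iff, Sym2.eq_iff,
    Set.mem_singleton_iff, ne_eq]
  aesop

lemma nbhd_keep (hn : 3 ≤ n) (hG : IsOrdinalTree n G) (huv : G.Adj u v)
    {a : PV} (ha : a ∈ activeVerts n) (hau : a ≠ u) (hav : a ≠ v) :
    (addLeaf G n s(u,v)).neighborSet a = G.neighborSet a := by
  have hw := w_not_active hn
  have haw : a ≠ Sum.inr (n-2) := fun h => hw (h ▸ ha)
  have hax : a ≠ Sum.inl n := fun h => xl_not_active (h ▸ ha)
  have hGw : ∀ b, ¬ G.Adj b (Sum.inr (n-2)) := fun b h => hw (hG.1 _ _ h).2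
  ext b
  simp only [SimpleGraph.mem_neighborSet, addLeaf_adj_iff, Sym2.eq_iff, ne_eq]
  constructor
  · rintro ⟨hne, (⟨h1, h2⟩ | h | h | h)⟩
    · exact h1
    · rcases h with ⟨h, -⟩ | ⟨h, -⟩ <;> [exact absurd h hau; exact absurd h haw]
    · rcases h with ⟨h, -⟩ | ⟨h, -⟩ <;> [exact absurd h hav; exact absurd h haw]
    · rcases h with ⟨h, -⟩ | ⟨h, -⟩ <;> [exact absurd h haw; exact absurd h hax]
  · intro h
    refine ⟨h.ne, Or.inl ⟨h, ?_⟩⟩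
    rintro (⟨h1, -⟩ | ⟨h1, -⟩) <;> [exact hau h1; exact hav h1]

lemma nbhd_u (hn : 3 ≤ n) (hG : IsOrdinalTree n G) (huv : G.Adj u v) :
    (addLeaf G n s(u,v)).neighborSet u
      = insert (Sum.inr (n-2)) (G.neighborSet u \ {v}) := by
  obtain ⟨hu, hv⟩ := hG.1 u v huv
  have hw := w_not_active hn
  have huw : u ≠ Sum.inr (n-2) := fun h => hw (h ▸ hu)
  have hvw : v ≠ Sum.inr (n-2) := fun h => hw (h ▸ hv)
  have hux : u ≠ Sum.inl n := fun h => xl_not_active (h ▸ hu)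
  have hne := huv.ne
  have hGw : ∀ b, ¬ G.Adj b (Sum.inr (n-2)) := fun b h => hw (hG.1 _ _ h).2
  ext b
  simp only [SimpleGraph.mem_neighborSet, addLeaf_adj_iff, Sym2.eq_iff,
    Set.mem_insert_iff, Set.mem_diff, Set.mem_singleton_iff, ne_eq]
  constructor
  · rintro ⟨hbne, (⟨h1, h2⟩ | h | h | h)⟩
    · exact Or.inr ⟨h1, fun hbv => h2 (Or.inl (by exact ⟨trivial, hbv⟩))⟩
    · rcases h with ⟨-, rfl⟩ | ⟨h, -⟩
      · exact Or.inl rfl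
      · exact absurd h huw
    · rcases h with ⟨h, -⟩ | ⟨h, -⟩
      · exact absurd h hne
      · exact absurd h huw
    · rcases h with ⟨h, -⟩ | ⟨h, -⟩
      · exact absurd h huw
      · exact absurd h hux
  · rintro (rfl | ⟨h, hbv⟩)
    · exact ⟨huw, by tauto⟩
    · refine ⟨h.ne, Or.inl ⟨h, ?_⟩⟩
      rintro (⟨-, h1⟩ | ⟨h1, -⟩) <;> [exact hbv h1; exact hne h1]
end NB

lemma addLeaf_edge_cases {n : ℕ} {G : SimpleGraph PV} {u v : PV} (f : Sym2 PV)
    (hf : f ∈ (addLeaf G n s(u,v)).edgeSet) :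
    (f ∈ G.edgeSet ∧ f ≠ s(u,v)) ∨ f = s(u, Sum.inr (n-2)) ∨
      f = s(v, Sum.inr (n-2)) ∨ f = s(Sum.inr (n-2), Sum.inl n) := by
  rw [addLeaf, SimpleGraph.edgeSet_fromEdgeSet] at hf
  obtain ⟨hf, -⟩ := hf
  simp only [Set.mem_union, Set.mem_diff, Set.mem_setOf_eq, Set.mem_singleton_iff,
    Sym2.mem_iff] at hf
  rcases hf with (⟨h1, h2⟩ | ⟨x, (rfl | rfl), rfl⟩) | h <;> tauto

lemma addLeaf_isAcyclic {n : ℕ} {G : SimpleGraph PV} {u v : PV}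
    (hn : 3 ≤ n) (hG : IsOrdinalTree n G) (huv : G.Adj u v) :
    (addLeaf G n s(u,v)).IsAcyclic := by
  classical
  obtain ⟨hu, hv⟩ := hG.1 u v huv
  have hGacyc : G.IsAcyclic := acyclic_of_induce hG.1 hG.2.1.IsAcyclic
  intro a c hc
  haveI := Classical.dec ((Sum.inr (n-2) : PV) ∈ c.support)
  by_cases hwc : (Sum.inr (n-2) : PV) ∈ c.support
  case neg =>
    have hedges : ∀ f ∈ c.edges, f ∈ G.edgeSet := by
      intro f hf
      rcases addLeaf_edge_cases f (c.edges_subset_edgeSet hf) with ⟨h1, -⟩ | rfl | rfl | rfl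
      · exact h1
      · exact absurd (c.snd_mem_support_of_mem_edges hf) hwc
      · exact absurd (c.snd_mem_support_of_mem_edges hf) hwc
      · exact absurd (c.fst_mem_support_of_mem_edges hf) hwc
    exact hGacyc (c.transfer G hedges) (hc.transfer hedges)
  case pos =>
    have hrot := hc.rotate hwc
    revert hrot
    generalize c.rotate _ hwc = c₀
    intro hc₀
    cases c₀ with
    | nil => exact absurd rfl hc₀.ne_nil
    | cons h₁ t₁ =>
      rename_i x
      obtain ⟨y, h₂, t₂, heq⟩ := SimpleGraph.Walk.exists_eq_cons_of_ne h₁.ne t₁.reverse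
      have ht₁ : t₁ = t₂.reverse.concat h₂.symm := by
        rw [← SimpleGraph.Walk.reverse_reverse t₁, heq, SimpleGraph.Walk.reverse_cons,
          SimpleGraph.Walk.concat_eq_append]
      rw [ht₁] at hc₀
      set m := t₂.reverse with hm
      rw [SimpleGraph.Walk.isCycle_def] at hc₀
      obtain ⟨htrail, -, hnodup⟩ := hc₀
      have hwm : Sum.inr (n-2) ∉ m.support := by
        simp only [SimpleGraph.Walk.support_cons, SimpleGraph.Walk.support_concat,
          List.tail_cons, List.concat_eq_append, List.nodup_append] at hnodup
        intro hmem
        exact hnodup.2.2 _ hmem _ (List.mem_singleton_self _) rfl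
      have hedgene : s(Sum.inr (n-2), x) ≠ s(y, Sum.inr (n-2)) := by
        rw [SimpleGraph.Walk.isTrail_def] at htrail
        simp only [SimpleGraph.Walk.edges_cons, SimpleGraph.Walk.edges_concat,
          List.concat_eq_append, List.nodup_cons, List.mem_append] at htrail
        intro hcontra
        exact htrail.1 (Or.inr (by simp [hcontra]))
      have hxy : x ≠ y := by
        rintro rfl
        exact hedgene (Sym2.eq_swap)
      have hx : x = u ∨ x = v ∨ x = Sum.inl n := by
        have : x ∈ (addLeaf G n s(u,v)).neighborSet (Sum.inr (n-2)) := h₁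
        rw [nbhd_w hn hG huv] at this
        simpa using this
      have hy : y = u ∨ y = v ∨ y = Sum.inl n := by
        have : y ∈ (addLeaf G n s(u,v)).neighborSet (Sum.inr (n-2)) := h₂
        rw [nbhd_w hn hG huv] at this
        simpa using this
      have hxlstuck : ∀ (d : PV) (q : (addLeaf G n s(u,v)).Walk (Sum.inl n) d),
          Sum.inr (n-2) ∉ q.support → Sum.inl n = d := by
        intro d q hq
        cases q with
        | nil => rfl
        | cons h₃ q₂ =>
          rename_i z
          have hz : z ∈ (addLeaf G n s(u,v)).neighborSet (Sum.inl n) := h₃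
          rw [nbhd_xl hn hG huv] at hz
          rw [Set.mem_singleton_iff] at hz
          subst hz
          exact absurd (by simp [SimpleGraph.Walk.support_cons,
            q₂.start_mem_support] : Sum.inr (n-2) ∈ _) hq
      have hxne : x ≠ Sum.inl n := by
        rintro rfl
        exact hxy (hxlstuck y m hwm)
      have hyne : y ≠ Sum.inl n := by
        rintro rfl
        have := hxlstuck x m.reverse (by
          simpa [SimpleGraph.Walk.support_reverse] using hwm)
        exact hxy this.symm
      have hsxy : s(x, y) = s(u, v) := by
        rcases hx with rfl | rfl | rfl
        · rcases hy with rfl | rfl | rfl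
          · exact absurd rfl hxy
          · rfl
          · exact absurd rfl hyne
        · rcases hy with rfl | rfl | rfl
          · exact Sym2.eq_swap
          · exact absurd rfl hxy
          · exact absurd rfl hyne
        · exact absurd rfl hxne
      have hedges : ∀ f ∈ m.edges, f ∈ G.edgeSet ∧ f ≠ s(u,v) := by
        intro f hf
        rcases addLeaf_edge_cases f (m.edges_subset_edgeSet hf) with h1 | rfl | rfl | rfl
        · exact h1
        · exact absurd (m.snd_mem_support_of_mem_edges hf) hwm
        · exact absurd (m.snd_mem_support_of_mem_edges hf) hwm
        · exact absurd (m.fst_mem_support_of_mem_edges hf) hwm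
      have hadjxy : G.Adj x y := by
        rw [← SimpleGraph.mem_edgeSet, hsxy]
        exact huv
      set q := m.transfer G (fun f hf => (hedges f hf).1) with hq
      have hein : s(u,v) ∉ q.edges := by
        rw [SimpleGraph.Walk.edges_transfer]
        intro hcontra
        exact (hedges _ hcontra).2 rfl
      have hpu := hGacyc.path_unique q.toPath (SimpleGraph.Path.singleton hadjxy)
      have : s(u,v) ∈ (q.toPath : G.Walk x y).edges := by
        rw [hpu]
        simp [SimpleGraph.Path.singleton, hsxy]
      exact hein (SimpleGraph.Walk.edges_toPath_subset q this)

section Rigid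
variable {V : Type} [Finite V] [DecidableEq V] {T : SimpleGraph V}

lemma shortest_path (hc : T.Connected) (a b : V) :
    ∃ p : T.Walk a b, p.IsPath ∧ p.length = T.dist a b := by
  obtain ⟨p, hp⟩ := hc.exists_walk_length_eq_dist a b
  exact ⟨p.bypass, p.bypass_isPath,
    le_antisymm (le_trans p.length_bypass_le hp.le) (SimpleGraph.dist_le _)⟩

lemma dist_split (c : V) {a b : V} (p : T.Walk a b) (hc : c ∈ p.support) :
    T.dist a c + T.dist c b ≤ p.length := by
  classical
  have h1 : T.dist a c ≤ (p.takeUntil c hc).length := SimpleGraph.dist_le _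
  have h2 : T.dist c b ≤ (p.dropUntil c hc).length := SimpleGraph.dist_le _
  have h3 := congrArg SimpleGraph.Walk.length (p.take_spec hc)
  rw [SimpleGraph.Walk.length_append] at h3
  omega

lemma adj_dist_ne (hT : T.IsTree) (r : V) {a b : V} (hab : T.Adj a b) :
    T.dist r a ≠ T.dist r b := by
  intro hEq
  obtain ⟨p, hp, hlen⟩ := shortest_path hT.isConnected r a
  have hbns : b ∉ p.support := by
    intro hbs
    have hsp := dist_split b p hbs
    rw [hlen, ← hEq] at hsp
    have hba : 0 < T.dist b a := hT.isConnected.pos_dist_of_ne hab.ne'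
    omega
  obtain ⟨q, hqp, hqlen⟩ := shortest_path hT.isConnected r b
  have hP : (p.concat hab).IsPath := concat_isPath hp hab hbns
  have huniq := hT.IsAcyclic.path_unique ⟨p.concat hab, hP⟩ ⟨q, hqp⟩
  have hlq := congrArg SimpleGraph.Walk.length (Subtype.ext_iff.mp huniq)
  rw [SimpleGraph.Walk.length_concat, hlen, hqlen, ← hEq] at hlq
  omega

lemma unique_down (hT : T.IsTree) (r : V) {a x y : V} (hx : T.Adj a x) (hy : T.Adj a y)
    (hdx : T.dist r x + 1 = T.dist r a) (hdy : T.dist r y + 1 = T.dist r a) : x = y := by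
  obtain ⟨px, hpx, hlx⟩ := shortest_path hT.isConnected r x
  obtain ⟨py, hpy, hly⟩ := shortest_path hT.isConnected r y
  have hax : a ∉ px.support := by
    intro h
    have := dist_split a px h
    rw [hlx] at this
    omega
  have hay : a ∉ py.support := by
    intro h
    have := dist_split a py h
    rw [hly] at this
    omega
  have h1 : (px.concat hx.symm).IsPath := concat_isPath hpx hx.symm hax
  have h2 : (py.concat hy.symm).IsPath := concat_isPath hpy hy.symm hay
  have huniq := hT.IsAcyclic.path_unique ⟨px.concat hx.symm, h1⟩ ⟨py.concat hy.symm, h2⟩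
  have hrev := congrArg (fun z : T.Walk r a => z.reverse.support) (Subtype.ext_iff.mp huniq)
  simp only [SimpleGraph.Walk.reverse_concat, SimpleGraph.Walk.support_cons] at hrev
  have h3 : px.reverse.support = py.reverse.support := by
    exact (List.cons.injEq _ _ _ _).mp hrev |>.2
  rw [px.reverse.support_eq_cons, py.reverse.support_eq_cons] at h3
  exact ((List.cons.injEq _ _ _ _).mp h3).1

lemma exists_down (hT : T.IsTree) (r : V) {a : V} (hpos : 0 < T.dist r a) :
    ∃ x, T.Adj a x ∧ T.dist r x + 1 = T.dist r a := by
  obtain ⟨p, hp, hlen⟩ := shortest_path hT.isConnected r a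
  have hne : a ≠ r := by
    rintro rfl
    rw [SimpleGraph.dist_self] at hpos
    omega
  obtain ⟨x, h, q, hq⟩ := SimpleGraph.Walk.exists_eq_cons_of_ne hne p.reverse
  have h1 : T.dist r x ≤ q.length := by
    rw [SimpleGraph.dist_comm]
    exact SimpleGraph.dist_le q
  have h2 : q.length + 1 = T.dist r a := by
    have hl := congrArg SimpleGraph.Walk.length hq
    rw [SimpleGraph.Walk.length_reverse, SimpleGraph.Walk.length_cons] at hl
    omega
  have h3 : T.dist r a ≤ T.dist r x + 1 := by
    have ht := hT.isConnected.dist_triangle (u := r) (v := x) (w := a)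
    have h4 : T.dist x a ≤ 1 :=
      SimpleGraph.dist_le (SimpleGraph.Walk.cons h.symm SimpleGraph.Walk.nil)
    omega
  exact ⟨x, h, by omega⟩

lemma tree_rigid (hT : T.IsTree) {L : Set V} (hLne : L.Nonempty)
    (hdeg : ∀ v, v ∉ L → (T.neighborSet v).ncard = 3)
    (σ : V ≃ V) (hσ : ∀ a b, T.Adj a b ↔ T.Adj (σ a) (σ b))
    (hfix : ∀ l ∈ L, σ l = l) : ∀ v, σ v = v := by
  classical
  obtain ⟨r, hr⟩ := hLne
  have hconn := hT.isConnected
  have hmono : ∀ (τ : V ≃ V), (∀ a b, T.Adj a b → T.Adj (τ a) (τ b)) →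
      ∀ a b : V, T.dist (τ a) (τ b) ≤ T.dist a b := by
    intro τ hτ a b
    obtain ⟨p, -, hlen⟩ := shortest_path hconn a b
    have := SimpleGraph.dist_le (p.map ⟨τ, fun h => hτ _ _ h⟩)
    rwa [SimpleGraph.Walk.length_map, hlen] at this
  have hdist : ∀ a, T.dist r (σ a) = T.dist r a := by
    intro a
    have h1 := hmono σ (fun a b h => (hσ a b).mp h) r a
    have h2 := hmono σ.symm
      (fun a b h => by
        have := (hσ (σ.symm a) (σ.symm b)).mpr
        simp only [Equiv.apply_symm_apply] at this
        exact this h) (σ r) (σ a)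
    simp only [Equiv.symm_apply_apply] at h2
    rw [hfix r hr] at h1 h2
    omega
  by_contra hbad
  push_neg at hbad
  obtain ⟨v0, hv0⟩ := hbad
  have hSfin : {v : V | σ v ≠ v}.Finite := Set.toFinite _
  obtain ⟨v, hvS, hvmax⟩ := Set.Finite.exists_maximalFor (T.dist r) _ hSfin ⟨v0, hv0⟩
  have hvL : v ∉ L := fun h => hvS (hfix v h)
  have hvr : v ≠ r := fun h => hvS (h ▸ hfix r hr)
  have hpos : 0 < T.dist r v := hconn.pos_dist_of_ne (Ne.symm hvr)
  obtain ⟨b, hvb, hdb⟩ := exists_down hT r hpos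
  have h3 : (T.neighborSet v).ncard = 3 := hdeg v hvL
  have hex : ∃ x ∈ T.neighborSet v, x ≠ b := by
    by_contra hno
    push_neg at hno
    have hsub : T.neighborSet v ⊆ {b} := fun x hx => hno x hx
    have := Set.ncard_le_ncard hsub (Set.finite_singleton b)
    rw [Set.ncard_singleton, h3] at this
    omega
  obtain ⟨x, hx, hxb⟩ := hex
  rw [SimpleGraph.mem_neighborSet] at hx
  have adj_diff : ∀ {p q : V}, T.Adj p q → T.dist r q ≤ T.dist r p + 1 := by
    intro p q h
    have h1 := hconn.dist_triangle (u := r) (v := p) (w := q)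
    have h2 : T.dist p q ≤ 1 :=
      SimpleGraph.dist_le (SimpleGraph.Walk.cons h SimpleGraph.Walk.nil)
    omega
  have hxup : T.dist r x = T.dist r v + 1 := by
    have d1 := adj_diff hx
    have d2 := adj_diff hx.symm
    have hne := adj_dist_ne hT r hx
    by_cases hcase : T.dist r x + 1 = T.dist r v
    · exact absurd (unique_down hT r hx hvb hcase hdb) hxb
    · omega
  have hxfix : σ x = x := by
    by_contra hxne
    have := hvmax hxne (by omega : T.dist r v ≤ T.dist r x)
    omega
  have hadj2 : T.Adj x (σ v) := by
    have hh := (hσ v x).mp hx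
    rw [hxfix] at hh
    exact hh.symm
  have hfinal := unique_down hT r hx.symm hadj2
    (by omega : T.dist r v + 1 = T.dist r x)
    (by rw [hdist]; omega)
  exact hvS hfinal.symm
end Rigid

lemma addLeaf_isOrdinalTree {n : ℕ} {G : SimpleGraph PV} {u v : PV}
    (hn : 3 ≤ n) (hG : IsOrdinalTree n G) (huv : G.Adj u v) :
    IsOrdinalTree (n+1) (addLeaf G n s(u,v)) := by
  obtain ⟨hu, hv⟩ := hG.1 u v huv
  have hedge := hG.1
  have htree := hG.2.1
  have hleaf := hG.2.2.1
  have hint := hG.2.2.2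
  have hw1 : (Sum.inr (n-2) : PV) ∈ activeVerts (n+1) := by
    rw [mem_active_inr]; omega
  have hx1 : (Sum.inl n : PV) ∈ activeVerts (n+1) := by rw [mem_active_inl]; omega
  have hGne : ∀ a ∈ activeVerts n, (G.neighborSet a).ncard ≠ 0 := by
    intro a ha
    rcases a with i | k
    · rw [hleaf i ha]; omega
    · rw [hint k ha]; omega
  have hcond1 : ∀ a b, (addLeaf G n s(u,v)).Adj a b →
      a ∈ activeVerts (n+1) ∧ b ∈ activeVerts (n+1) := by
    intro a b hab
    rw [addLeaf_adj_iff] at hab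
    obtain ⟨-, h⟩ := hab
    rcases h with ⟨h1, -⟩ | h | h | h
    · obtain ⟨ha, hb⟩ := hedge a b h1
      exact ⟨activeVerts_mono ha, activeVerts_mono hb⟩
    · rw [Sym2.eq_iff] at h
      rcases h with ⟨rfl, rfl⟩ | ⟨rfl, rfl⟩
      · exact ⟨activeVerts_mono hu, hw1⟩
      · exact ⟨hw1, activeVerts_mono hu⟩
    · rw [Sym2.eq_iff] at h
      rcases h with ⟨rfl, rfl⟩ | ⟨rfl, rfl⟩
      · exact ⟨activeVerts_mono hv, hw1⟩
      · exact ⟨hw1, activeVerts_mono hv⟩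
    · rw [Sym2.eq_iff] at h
      rcases h with ⟨rfl, rfl⟩ | ⟨rfl, rfl⟩
      · exact ⟨hw1, hx1⟩
      · exact ⟨hx1, hw1⟩
  have hadjuw : (addLeaf G n s(u,v)).Adj u (Sum.inr (n-2)) := by
    rw [addLeaf_adj_iff]
    exact ⟨fun hh => w_not_active hn (hh ▸ hu), Or.inr (Or.inl rfl)⟩
  have hadjvw : (addLeaf G n s(u,v)).Adj v (Sum.inr (n-2)) := by
    rw [addLeaf_adj_iff]
    exact ⟨fun hh => w_not_active hn (hh ▸ hv), Or.inr (Or.inr (Or.inl rfl))⟩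
  have hkeep : ∀ a ∈ activeVerts n, ((addLeaf G n s(u,v)).neighborSet a).ncard
      = (G.neighborSet a).ncard := by
    intro a ha
    have hfin : (G.neighborSet a).Finite := by
      by_contra hinf
      exact hGne a ha (Set.Infinite.ncard hinf)
    have hcount : ∀ b c : PV, G.Adj b c → b ∈ activeVerts n →
        ((addLeaf G n s(b,c)).neighborSet b).ncard = (G.neighborSet b).ncard := by
      intro b c hbc hbact
      have hfinb : (G.neighborSet b).Finite := by
        by_contra hinf
        exact hGne b hbact (Set.Infinite.ncard hinf)
      rw [nbhd_u hn hG hbc]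
      have hwnm : (Sum.inr (n-2) : PV) ∉ G.neighborSet b \ {c} := by
        rintro ⟨hmem, -⟩
        exact w_not_active hn (hedge _ _ hmem).2
      rw [Set.ncard_insert_of_notMem hwnm hfinb.diff,
        Set.ncard_diff_singleton_of_mem (show c ∈ G.neighborSet b from hbc)]
      have := hGne b hbact
      omega
    by_cases hau : a = u
    · subst hau
      exact hcount a v huv ha
    · by_cases hav : a = v
      · subst hav
        have hswap : s(u,a) = s(a,u) := Sym2.eq_swap
        rw [hswap]
        exact hcount a u huv.symm ha
      · rw [nbhd_keep hn hG huv ha hau hav]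
  refine ⟨hcond1, ⟨?_, induce_acyclic_of_acyclic (addLeaf_isAcyclic hn hG huv)⟩, ?_, ?_⟩
  · -- connectivity
    have hGH : ∀ {x y : PV}, G.Adj x y → (addLeaf G n s(u,v)).Reachable x y := by
      intro x y h
      by_cases hcase : s(x,y) = s(u,v)
      · rw [Sym2.eq_iff] at hcase
        rcases hcase with ⟨rfl, rfl⟩ | ⟨rfl, rfl⟩
        · exact (hadjuw.reachable).trans hadjvw.reachable.symm
        · exact (hadjvw.reachable).trans hadjuw.reachable.symm
      · exact SimpleGraph.Adj.reachable
          (by rw [addLeaf_adj_iff]; exact ⟨h.ne, Or.inl ⟨h, hcase⟩⟩)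
    have hGHwalk : ∀ {x y : PV}, G.Walk x y → (addLeaf G n s(u,v)).Reachable x y := by
      intro x y p
      induction p with
      | nil => exact SimpleGraph.Reachable.refl _
      | cons h p ih => exact (hGH h).trans ih
    have hreachw : ∀ a ∈ activeVerts (n+1),
        (addLeaf G n s(u,v)).Reachable a (Sum.inr (n-2)) := by
      intro a ha
      have hadjxl : (addLeaf G n s(u,v)).Adj (Sum.inl n) (Sum.inr (n-2)) := by
        rw [addLeaf_adj_iff]
        exact ⟨by simp, Or.inr (Or.inr (Or.inr Sym2.eq_swap))⟩
      by_cases han : a ∈ activeVerts n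
      · have hreach : G.Reachable a u := by
          obtain ⟨q⟩ := htree.isConnected ⟨a, han⟩ ⟨u, hu⟩
          exact ⟨q.map (SimpleGraph.Embedding.induce _).toHom⟩
        obtain ⟨p⟩ := hreach
        exact (hGHwalk p).trans hadjuw.reachable
      · rcases a with i | k
        · have hi : i < n + 1 := ha
          have hin : i = n := by
            by_contra hne2
            exact han (show i < n from by omega)
          subst hin
          exact hadjxl.reachable
        · have hk : k + 2 < n + 1 := ha
          have hkn : k = n - 2 := by
            have hnot : ¬ (k + 2 < n) := han
            omega
          subst hkn
          exact SimpleGraph.Reachable.refl _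
    refine induce_connected_of_reachable hcond1
      ⟨Sum.inl 0, by rw [mem_active_inl]; omega⟩ ?_
    intro a ha b hb
    exact (hreachw a ha).trans (hreachw b hb).symm
  · -- leaves
    intro i hi
    by_cases hi_n : i < n
    · rw [hkeep _ hi_n]
      exact hleaf i hi_n
    · have : i = n := by omega
      subst this
      rw [nbhd_xl hn hG huv, Set.ncard_singleton]
  · -- internal
    intro k hk
    by_cases hk_n : k + 2 < n
    · rw [hkeep _ hk_n]
      exact hint k hk_n
    · have hkn : k = n - 2 := by omega
      subst hkn
      rw [nbhd_w hn hG huv]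
      have huxl : u ≠ Sum.inl n := fun h => xl_not_active (h ▸ hu)
      have hvxl : v ≠ Sum.inl n := fun h => xl_not_active (h ▸ hv)
      rw [Set.ncard_insert_of_notMem (by
            rintro (rfl | h)
            · exact huv.ne rfl
            · exact huxl (by simpa using h))
          ((Set.finite_singleton _).insert _),
        Set.ncard_insert_of_notMem (by simpa using hvxl) (Set.finite_singleton _),
        Set.ncard_singleton]

section Part2
variable {n : ℕ} {G : SimpleGraph PV} {u v u' v' : PV}

lemma adj_uw (hn : 3 ≤ n) (hG : IsOrdinalTree n G) (huv : G.Adj u v) :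
    (addLeaf G n s(u,v)).Adj u (Sum.inr (n-2)) := by
  rw [addLeaf_adj_iff]
  exact ⟨fun hh => w_not_active hn (hh ▸ (hG.1 u v huv).1), Or.inr (Or.inl rfl)⟩

lemma adj_xlw (hn : 3 ≤ n) (hG : IsOrdinalTree n G) (huv : G.Adj u v) :
    (addLeaf G n s(u,v)).Adj (Sum.inl n) (Sum.inr (n-2)) := by
  rw [addLeaf_adj_iff]
  exact ⟨by simp, Or.inr (Or.inr (Or.inr Sym2.eq_swap))⟩

lemma leafiso_fixes_w (hn : 3 ≤ n) (hG : IsOrdinalTree n G)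
    (huv : G.Adj u v) (hu'v' : G.Adj u' v')
    (π : PV ≃ PV) (hfixl : ∀ i, π (Sum.inl i) = Sum.inl i)
    (hadj : ∀ a b, (addLeaf G n s(u,v)).Adj a b →
      (addLeaf G n s(u',v')).Adj (π a) (π b)) :
    π (Sum.inr (n-2)) = Sum.inr (n-2) := by
  have h2 := hadj _ _ (adj_xlw hn hG huv)
  rw [hfixl n] at h2
  have h3 : π (Sum.inr (n-2)) ∈ (addLeaf G n s(u',v')).neighborSet (Sum.inl n) := h2
  rw [nbhd_xl hn hG hu'v'] at h3
  exact h3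

lemma leafiso_maps_active (hn : 3 ≤ n) (hG : IsOrdinalTree n G)
    (huv : G.Adj u v) (hu'v' : G.Adj u' v')
    (π : PV ≃ PV) (hfixl : ∀ i, π (Sum.inl i) = Sum.inl i)
    (hadj : ∀ a b, (addLeaf G n s(u,v)).Adj a b →
      (addLeaf G n s(u',v')).Adj (π a) (π b)) :
    ∀ a ∈ activeVerts n, π a ∈ activeVerts n := by
  have hπw := leafiso_fixes_w hn hG huv hu'v' π hfixl hadj
  obtain ⟨hu', hv'⟩ := hG.1 u' v' hu'v'
  intro a ha
  rcases a with i | k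
  · rw [hfixl]; exact ha
  · have hk : k + 2 < n := ha
    have hdeg := hG.2.2.2 k hk
    obtain ⟨b, hb⟩ := Set.nonempty_of_ncard_ne_zero (by rw [hdeg]; omega :
      (G.neighborSet (Sum.inr k)).ncard ≠ 0)
    rw [SimpleGraph.mem_neighborSet] at hb
    have hπxl : π (Sum.inr k) ≠ Sum.inl n := by
      intro hh
      rw [← hfixl n] at hh
      exact absurd (π.injective hh) (by simp)
    by_cases hcase : s(Sum.inr k, b) = s(u,v)
    · have hadj1 : (addLeaf G n s(u,v)).Adj (Sum.inr k) (Sum.inr (n-2)) := by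
        rw [Sym2.eq_iff] at hcase
        rcases hcase with ⟨h1, -⟩ | ⟨h1, -⟩
        · rw [h1]; exact adj_uw hn hG huv
        · rw [h1]
          have hswap : (addLeaf G n s(u,v)) = (addLeaf G n s(v,u)) := by
            rw [Sym2.eq_swap]
          rw [hswap]
          exact adj_uw hn hG huv.symm
      have h2 := hadj _ _ hadj1
      rw [hπw] at h2
      have h3 : π (Sum.inr k) ∈ (addLeaf G n s(u',v')).neighborSet (Sum.inr (n-2)) :=
        h2.symm
      rw [nbhd_w hn hG hu'v'] at h3
      rcases h3 with h3 | h3 | h3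
      · rw [h3]; exact hu'
      · rw [h3]; exact hv'
      · exact absurd h3 hπxl
    · have hadj1 : (addLeaf G n s(u,v)).Adj (Sum.inr k) b := by
        rw [addLeaf_adj_iff]
        exact ⟨hb.ne, Or.inl ⟨hb, hcase⟩⟩
      have h2 := hadj _ _ hadj1
      have hπnw : π (Sum.inr k) ≠ Sum.inr (n-2) := by
        intro hh
        rw [← hπw] at hh
        have := π.injective hh
        rw [Sum.inr.injEq] at this
        omega
      rw [addLeaf_adj_iff] at h2
      obtain ⟨-, h2⟩ := h2
      rcases h2 with ⟨h2, -⟩ | h2 | h2 | h2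
      · exact (hG.1 _ _ h2).1
      · rw [Sym2.eq_iff] at h2
        rcases h2 with ⟨h2, -⟩ | ⟨h2, -⟩
        · rw [h2]; exact hu'
        · exact absurd h2 hπnw
      · rw [Sym2.eq_iff] at h2
        rcases h2 with ⟨h2, -⟩ | ⟨h2, -⟩
        · rw [h2]; exact hv'
        · exact absurd h2 hπnw
      · rw [Sym2.eq_iff] at h2
        rcases h2 with ⟨h2, -⟩ | ⟨h2, -⟩
        · exact absurd h2 hπnw
        · exact absurd h2 hπxl

lemma leafiso_endpoints (hn : 3 ≤ n) (hG : IsOrdinalTree n G)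
    (huv : G.Adj u v) (hu'v' : G.Adj u' v')
    (π : PV ≃ PV) (hfixl : ∀ i, π (Sum.inl i) = Sum.inl i)
    (hadj : ∀ a b, (addLeaf G n s(u,v)).Adj a b →
      (addLeaf G n s(u',v')).Adj (π a) (π b)) :
    (π u = u' ∧ π v = v') ∨ (π u = v' ∧ π v = u') := by
  have hπw := leafiso_fixes_w hn hG huv hu'v' π hfixl hadj
  obtain ⟨hu, hv⟩ := hG.1 u v huv
  have hnbr : ∀ x : PV, (addLeaf G n s(u,v)).Adj x (Sum.inr (n-2)) →
      x ∈ activeVerts n → π x = u' ∨ π x = v' := by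
    intro x hxw hxact
    have h2 := hadj _ _ hxw
    rw [hπw] at h2
    have h3 : π x ∈ (addLeaf G n s(u',v')).neighborSet (Sum.inr (n-2)) := h2.symm
    rw [nbhd_w hn hG hu'v'] at h3
    rcases h3 with h3 | h3 | h3
    · exact Or.inl h3
    · exact Or.inr h3
    · exfalso
      rw [← hfixl n] at h3
      have := π.injective h3
      rw [this] at hxact
      exact xl_not_active hxact
  have hpu := hnbr u (adj_uw hn hG huv) hu
  have hpv := hnbr v (by
    have hswap : (addLeaf G n s(u,v)) = (addLeaf G n s(v,u)) := by rw [Sym2.eq_swap]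
    rw [hswap]
    exact adj_uw hn hG huv.symm) hv
  have hne2 : π u ≠ π v := fun h => huv.ne (π.injective h)
  rcases hpu with h1 | h1 <;> rcases hpv with h2 | h2
  · exact absurd (h1.trans h2.symm) hne2
  · exact Or.inl ⟨h1, h2⟩
  · exact Or.inr ⟨h1, h2⟩
  · exact absurd (h1.trans h2.symm) hne2

lemma leafiso_G_forward (hn : 3 ≤ n) (hG : IsOrdinalTree n G)
    (huv : G.Adj u v) (hu'v' : G.Adj u' v')
    (π : PV ≃ PV) (hfixl : ∀ i, π (Sum.inl i) = Sum.inl i)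
    (hadj : ∀ a b, (addLeaf G n s(u,v)).Adj a b →
      (addLeaf G n s(u',v')).Adj (π a) (π b)) :
    ∀ a b, a ∈ activeVerts n → b ∈ activeVerts n → G.Adj a b → G.Adj (π a) (π b) := by
  have hπw := leafiso_fixes_w hn hG huv hu'v' π hfixl hadj
  have hmaps := leafiso_maps_active hn hG huv hu'v' π hfixl hadj
  have hends := leafiso_endpoints hn hG huv hu'v' π hfixl hadj
  intro a b ha hb hab
  by_cases hcase : s(a,b) = s(u,v)
  · rw [Sym2.eq_iff] at hcase
    rcases hcase with ⟨rfl, rfl⟩ | ⟨rfl, rfl⟩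
    · rcases hends with ⟨h1, h2⟩ | ⟨h1, h2⟩
      · rw [h1, h2]; exact hu'v'
      · rw [h1, h2]; exact hu'v'.symm
    · rcases hends with ⟨h1, h2⟩ | ⟨h1, h2⟩
      · rw [h1, h2]; exact hu'v'.symm
      · rw [h1, h2]; exact hu'v'
  · have h2 := hadj a b (by rw [addLeaf_adj_iff]; exact ⟨hab.ne, Or.inl ⟨hab, hcase⟩⟩)
    have hπa := hmaps a ha
    have hπb := hmaps b hb
    rw [addLeaf_adj_iff] at h2
    obtain ⟨-, h2⟩ := h2
    have hwact := w_not_active (n := n) hn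
    rcases h2 with ⟨h2, -⟩ | h2 | h2 | h2
    · exact h2
    · rw [Sym2.eq_iff] at h2
      rcases h2 with ⟨-, h3⟩ | ⟨h3, -⟩ <;> [exact absurd (h3 ▸ hπb) hwact;
        exact absurd (h3 ▸ hπa) hwact]
    · rw [Sym2.eq_iff] at h2
      rcases h2 with ⟨-, h3⟩ | ⟨h3, -⟩ <;> [exact absurd (h3 ▸ hπb) hwact;
        exact absurd (h3 ▸ hπa) hwact]
    · rw [Sym2.eq_iff] at h2
      rcases h2 with ⟨h3, -⟩ | ⟨-, h3⟩ <;> [exact absurd (h3 ▸ hπa) hwact;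
        exact absurd (h3 ▸ hπb) hwact]
end Part2

lemma induce_nbhd_ncard {G : SimpleGraph PV} {n : ℕ}
    (hs : ∀ a b, G.Adj a b → a ∈ activeVerts n ∧ b ∈ activeVerts n)
    (a : PV) (ha : a ∈ activeVerts n) :
    ((G.induce (activeVerts n)).neighborSet ⟨a, ha⟩).ncard = (G.neighborSet a).ncard := by
  have himg : Subtype.val '' ((G.induce (activeVerts n)).neighborSet ⟨a, ha⟩)
      = G.neighborSet a := by
    ext b
    constructor
    · rintro ⟨⟨b', hb'⟩, hadj, rfl⟩
      exact hadj
    · intro hb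
      exact ⟨⟨b, (hs _ _ hb).2⟩, hb, rfl⟩
  rw [← himg, Set.ncard_image_of_injective _ Subtype.val_injective]

lemma no_leaf_iso {n : ℕ} {G : SimpleGraph PV} {u v u' v' : PV}
    (hn : 3 ≤ n) (hG : IsOrdinalTree n G) (huv : G.Adj u v) (hu'v' : G.Adj u' v')
    (hnee : s(u,v) ≠ s(u',v')) :
    ¬ (∃ π : PV ≃ PV, (∀ i, π (Sum.inl i) = Sum.inl i) ∧
      ∀ a b, (addLeaf G n s(u,v)).Adj a b ↔ (addLeaf G n s(u',v')).Adj (π a) (π b)) := by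
  rintro ⟨π, hfixl, hiff⟩
  have hadj : ∀ a b, (addLeaf G n s(u,v)).Adj a b →
      (addLeaf G n s(u',v')).Adj (π a) (π b) := fun a b h => (hiff a b).mp h
  have hfixl' : ∀ i, π.symm (Sum.inl i) = Sum.inl i := fun i =>
    π.injective (by rw [Equiv.apply_symm_apply, hfixl])
  have hadj' : ∀ a b, (addLeaf G n s(u',v')).Adj a b →
      (addLeaf G n s(u,v)).Adj (π.symm a) (π.symm b) := by
    intro a b h
    exact (hiff _ _).mpr (by simpa using h)
  have hmaps := leafiso_maps_active hn hG huv hu'v' π hfixl hadj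
  have hmaps' := leafiso_maps_active hn hG hu'v' huv π.symm hfixl' hadj'
  have hmem : ∀ a, a ∈ activeVerts n ↔ π a ∈ activeVerts n := by
    intro a
    constructor
    · exact fun h => hmaps a h
    · intro h
      have := hmaps' (π a) h
      simpa using this
  haveI : Finite ↥(activeVerts n) := (activeVerts_finite n).to_subtype
  haveI : DecidableEq ↥(activeVerts n) := Classical.decEq _
  set σ' : ↥(activeVerts n) ≃ ↥(activeVerts n) := π.subtypeEquiv hmem with hσ'def
  have hfwd := leafiso_G_forward hn hG huv hu'v' π hfixl hadj
  have hbwd := leafiso_G_forward hn hG hu'v' huv π.symm hfixl' hadj'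
  have hσadj : ∀ a b : ↥(activeVerts n), (G.induce (activeVerts n)).Adj a b ↔
      (G.induce (activeVerts n)).Adj (σ' a) (σ' b) := by
    intro a b
    constructor
    · intro h
      exact hfwd a.val b.val a.2 b.2 h
    · intro h
      have h2 : G.Adj (π a.val) (π b.val) := h
      have h3 := hbwd _ _ ((hmem _).mp a.2) ((hmem _).mp b.2) h2
      simpa using h3
  have hrig := tree_rigid hG.2.1
    (L := {x : ↥(activeVerts n) | ∃ i, x.val = Sum.inl i})
    ⟨⟨Sum.inl 0, by rw [mem_active_inl]; omega⟩, ⟨0, rfl⟩⟩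
    (by
      rintro ⟨a, ha⟩ hnotL
      rcases a with i | k
      · exact absurd ⟨i, rfl⟩ hnotL
      · rw [induce_nbhd_ncard hG.1 _ ha]
        exact hG.2.2.2 k ha)
    σ' hσadj
    (by
      rintro ⟨a, ha⟩ ⟨i, hva⟩
      simp only at hva
      subst hva
      apply Subtype.ext
      exact hfixl i)
  obtain ⟨hu, hv⟩ := hG.1 u v huv
  have hπu : π u = u := congrArg Subtype.val (hrig ⟨u, hu⟩)
  have hπv : π v = v := congrArg Subtype.val (hrig ⟨v, hv⟩)
  have hends := leafiso_endpoints hn hG huv hu'v' π hfixl hadj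
  rw [hπu, hπv] at hends
  apply hnee
  rw [Sym2.eq_iff]
  exact hends

/-- The tree built after `n` steps from the decision sequence `D` (the decisions
`D 3, …, D (n-1)` are used; stages below 3 give `τ_3`). -/
def buildTree (D : ℕ → Sym2 PV) : ℕ → SimpleGraph PV
  | 0 => tau3
  | 1 => tau3
  | 2 => tau3
  | 3 => tau3
  | n + 4 => addLeaf (buildTree D (n + 3)) (n + 3) (D (n + 3))

/-- A decision sequence is valid for rank `N` if at each stage `3 ≤ n < N` the
decision `D n` is an edge of the tree built so far. -/
def ValidSeq (N : ℕ) (D : ℕ → Sym2 PV) : Prop :=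
  ∀ n, 3 ≤ n → n < N → D n ∈ (buildTree D n).edgeSet

/-- Decision sequences of length `N - 3`, normalized to a fixed junk value outside
the stages `3 ≤ n < N`. -/
def DecisionSeq (N : ℕ) : Type :=
  {D : ℕ → Sym2 PV // ValidSeq N D ∧
    ∀ n, n < 3 ∨ N ≤ n → D n = s((Sum.inl 0 : PV), Sum.inl 0)}

/-- Identification of two leaf-labeled trees by an isomorphism fixing every leaf. -/
def LeafIso (G G' : SimpleGraph PV) : Prop :=
  ∃ π : PV ≃ PV, (∀ i, π (Sum.inl i) = Sum.inl i) ∧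
    ∀ a b, G.Adj a b ↔ G'.Adj (π a) (π b)

/-- Subdividing an edge `(u,v)` of an unrooted bifurcating tree with
`n ≥ 3` leaves by a new degree-3 vertex `w` and attaching a new leaf to `w` yields an
unrooted bifurcating tree with `n + 1` leaves; moreover the two resulting trees
obtained from distinct edges `e ≠ e'` of the same tree are non-isomorphic as
leaf-labeled trees. -/
theorem stmt_16 (n : ℕ) (hn : 3 ≤ n) (G : SimpleGraph PV)
    (hG : IsOrdinalTree n G) :
    (∀ e ∈ G.edgeSet, IsOrdinalTree (n + 1) (addLeaf G n e)) ∧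
    ∀ e ∈ G.edgeSet, ∀ e' ∈ G.edgeSet, e ≠ e' →
      ¬ LeafIso (addLeaf G n e) (addLeaf G n e') := by
  constructor
  · intro e
    induction e using Sym2.ind with
    | _ u v =>
      intro he
      exact addLeaf_isOrdinalTree hn hG ((SimpleGraph.mem_edgeSet G).mp he)
  · intro e
    induction e using Sym2.ind with
    | _ u v =>
      intro he e'
      induction e' using Sym2.ind with
      | _ u' v' =>
        intro he' hnee
        exact no_leaf_iso hn hG ((SimpleGraph.mem_edgeSet G).mp he)
          ((SimpleGraph.mem_edgeSet G).mp he') hnee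
end
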